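/- arXiv:1808.05491 — 2 statements merged into one kernel-verified Lean document; each statement's English description precedes it below -/
import Mathlib

section
/- Let GU₂ = { X ∈ M₂(ℂ) : X X* = x·I for some x ≠ 0 } be the group of unitary similitudes, acting on the right on N = M₂(ℂ) \ {0}. For X ∈ N with det X = 0, X can be written as X = v·wᵀ with v, w ∈ ℂ² \ {0}, and the map sending the GU₂-orbit of X to the line [v] ∈ ℂP¹ is a well-defined bijection from { [X] ∈ N/GU₂ : det X = 0 } onto ℂP¹. -/
/-!
A nonzero singular `2 × 2` matrix has all `2 × 2` minors zero, so it is the outer product of one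
of its nonzero columns (rescaled) with the corresponding nonzero row. Right multiplication by `g`
changes `v·wᵀ` into `v·(wᵀg)`, so the line of `v` is an invariant of the orbit. Conversely it is
a complete invariant, because `GU₂` acts transitively on nonzero row vectors: the matrix with
rows `u` and `(-ū₁, ū₀)` is a similitude carrying `e₀` to `u`.
-/

open Matrix
open scoped ComplexOrder

/-- The group of unitary similitudes: `X X* = x·I` for some `x ≠ 0`. -/
def GU2 : Set (Matrix (Fin 2) (Fin 2) ℂ) :=
  {g | ∃ x : ℂ, x ≠ 0 ∧ g * star g = x • (1 : Matrix (Fin 2) (Fin 2) ℂ)}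

lemma Matrix.minor_eq_zero_of_det_eq_zero {R : Type*} [CommRing R]
    {X : Matrix (Fin 2) (Fin 2) R} (h : X.det = 0) (i k j l : Fin 2) :
    X k l * X i j = X k j * X i l := by
  rw [det_fin_two] at h
  fin_cases i <;> fin_cases k <;> fin_cases j <;> fin_cases l <;> simp <;>
    first | ring | linear_combination h | linear_combination -h

lemma Matrix.exists_eq_vecMulVec_of_minor_eq_zero {K m n : Type*} [Field K]
    {X : Matrix m n K} (hX : X ≠ 0) (h : ∀ i k j l, X k l * X i j = X k j * X i l) :
    ∃ v w, v ≠ 0 ∧ w ≠ 0 ∧ X = vecMulVec v w := by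
  obtain ⟨i, j, hij⟩ : ∃ i j, X i j ≠ 0 := by
    by_contra! h0
    exact hX (Matrix.ext h0)
  refine ⟨fun k => X k j / X i j, X i, ?_, fun hi => hij (congrFun hi j), ?_⟩
  · exact Function.ne_iff.mpr ⟨i, by simpa using hij⟩
  · ext k l
    rw [vecMulVec_apply, div_mul_eq_mul_div, eq_div_iff hij, h]

lemma Projectivization.mk_eq_mk_of_vecMulVec_eq {K m n : Type*} [Field K]
    {v v' : m → K} {w u : n → K} (hv : v ≠ 0) (hv' : v' ≠ 0) (hw : w ≠ 0)
    (h : vecMulVec v w = vecMulVec v' u) : mk K v hv = mk K v' hv' := by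
  obtain ⟨j, hj⟩ := Function.ne_iff.mp hw
  have hcol : ∀ i, v i * w j = v' i * u j := fun i => by
    simpa [vecMulVec_apply] using congrFun (congrFun h i) j
  rw [mk_eq_mk_iff']
  refine ⟨u j / w j, funext fun i => ?_⟩
  simp only [Pi.smul_apply, smul_eq_mul]
  rw [div_mul_eq_mul_div, div_eq_iff hj, mul_comm, hcol]

lemma mul_mem_GU2 {g h : Matrix (Fin 2) (Fin 2) ℂ} (hg : g ∈ GU2) (hh : h ∈ GU2) :
    g * h ∈ GU2 := by
  obtain ⟨x, hx, hgx⟩ := hg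
  obtain ⟨y, hy, hhy⟩ := hh
  refine ⟨x * y, mul_ne_zero hx hy, ?_⟩
  rw [star_mul, Matrix.mul_assoc, ← Matrix.mul_assoc h, hhy, Matrix.smul_mul, Matrix.one_mul,
    Matrix.mul_smul, hgx, smul_smul, mul_comm]

lemma smul_mem_GU2 {g : Matrix (Fin 2) (Fin 2) ℂ} {c : ℂ} (hc : c ≠ 0) (hg : g ∈ GU2) :
    c • g ∈ GU2 := by
  obtain ⟨x, hx, hgx⟩ := hg
  refine ⟨c * star c * x, by simp [hc, hx], ?_⟩
  rw [star_smul, Matrix.smul_mul, Matrix.mul_smul, hgx, smul_smul, smul_smul, mul_comm c]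

lemma star_mem_GU2 {g : Matrix (Fin 2) (Fin 2) ℂ} (hg : g ∈ GU2) : star g ∈ GU2 := by
  obtain ⟨x, hx, hgx⟩ := hg
  have hright : g * (x⁻¹ • star g) = 1 := by
    rw [Matrix.mul_smul, hgx, smul_smul, inv_mul_cancel₀ hx, one_smul]
  have hleft : x⁻¹ • (star g * g) = 1 := by
    rw [← Matrix.smul_mul]; exact mul_eq_one_comm.mp hright
  refine ⟨x, hx, ?_⟩
  rw [star_star, ← hleft, smul_smul, mul_inv_cancel₀ hx, one_smul]

noncomputable def frame (u : Fin 2 → ℂ) : Matrix (Fin 2) (Fin 2) ℂ :=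
  !![u 0, u 1; -star (u 1), star (u 0)]

lemma frame_mul_star (u : Fin 2 → ℂ) : frame u * star (frame u) = (u ⬝ᵥ star u) • 1 := by
  ext i j
  fin_cases i <;> fin_cases j <;>
    simp [frame, mul_apply, Fin.sum_univ_two, star_apply, one_apply, dotProduct] <;> ring

lemma frame_mem_GU2 {u : Fin 2 → ℂ} (hu : u ≠ 0) : frame u ∈ GU2 :=
  ⟨_, dotProduct_self_star_eq_zero.not.mpr hu, frame_mul_star u⟩

lemma single_vecMul_frame (u : Fin 2 → ℂ) : Pi.single 0 1 ᵥ* frame u = u := by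
  ext j
  fin_cases j <;> simp [frame, vecMul, dotProduct, Fin.sum_univ_two]

lemma vecMul_star_frame (u : Fin 2 → ℂ) :
    u ᵥ* star (frame u) = (u ⬝ᵥ star u) • Pi.single 0 1 := by
  ext j
  fin_cases j <;> simp [frame, vecMul, dotProduct, Fin.sum_univ_two, star_apply]
  ring

lemma exists_mem_GU2_vecMul_eq {u z : Fin 2 → ℂ} (hu : u ≠ 0) (hz : z ≠ 0) :
    ∃ g ∈ GU2, u ᵥ* g = z := by
  have hc : u ⬝ᵥ star u ≠ 0 := dotProduct_self_star_eq_zero.not.mpr hu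
  refine ⟨(u ⬝ᵥ star u)⁻¹ • (star (frame u) * frame z),
    smul_mem_GU2 (inv_ne_zero hc)
      (mul_mem_GU2 (star_mem_GU2 (frame_mem_GU2 hu)) (frame_mem_GU2 hz)), ?_⟩
  rw [vecMul_smul, ← vecMul_vecMul, vecMul_star_frame, smul_vecMul, single_vecMul_frame,
    smul_smul, inv_mul_cancel₀ hc, one_smul]

/-- Every nonzero `X ∈ M₂(ℂ)` with `det X = 0` factors as an outer
product `X = v·wᵀ` of nonzero vectors, and two such matrices lie in the same
right `GU₂`-orbit iff their left factors span the same line in `ℂP¹`; hence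
`[X] ↦ [v]` is a well-defined bijection from the determinant-zero orbits onto `ℂP¹`. -/
theorem stmt_12 :
    (∀ X : Matrix (Fin 2) (Fin 2) ℂ, X ≠ 0 → X.det = 0 →
      ∃ v w : Fin 2 → ℂ, v ≠ 0 ∧ w ≠ 0 ∧ X = Matrix.vecMulVec v w) ∧
    (∀ (v w v' w' : Fin 2 → ℂ) (hv : v ≠ 0) (_ : w ≠ 0) (hv' : v' ≠ 0) (_ : w' ≠ 0),
      (∃ g ∈ GU2, Matrix.vecMulVec v w = Matrix.vecMulVec v' w' * g) ↔
        Projectivization.mk ℂ v hv = Projectivization.mk ℂ v' hv') := by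
  refine ⟨fun X hX hdet =>
      exists_eq_vecMulVec_of_minor_eq_zero hX (minor_eq_zero_of_det_eq_zero hdet),
    fun v w v' w' hv hw hv' hw' => ⟨?_, fun h => ?_⟩⟩
  · rintro ⟨g, -, h⟩
    rw [vecMulVec_mul] at h
    exact Projectivization.mk_eq_mk_of_vecMulVec_eq hv hv' hw h
  · obtain ⟨a, rfl⟩ := (Projectivization.mk_eq_mk_iff' ℂ _ _ hv hv').mp h
    have ha : a ≠ 0 := by rintro rfl; simp at hv
    obtain ⟨g, hg, hgw⟩ := exists_mem_GU2_vecMul_eq hw' (smul_ne_zero ha hw)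
    refine ⟨g, hg, ?_⟩
    rw [vecMulVec_mul, hgw, smul_vecMulVec, vecMulVec_smul]
end

section
/- Let M ∈ SL₂(ℂ), M ≠ ±I, and let X = v·wᵀ be a rank-one matrix with v, w ∈ ℂ² \ {0}. Then the GU₂-orbit of X is fixed by the action X ↦ MX (i.e., MX ∈ X·GU₂) if and only if v spans an eigenline of M. -/
/-!
`M X = (M v) wᵀ` and `X g = v (wᵀ g)` are both outer products with first factor determined up to
scalars, so `M X = X g` forces `M v ∥ v`. Conversely, if `M v = μ v` then the scalar similitude
`μ • 1` works, and `μ ≠ 0` because `M` is invertible.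
-/

open Matrix

theorem Matrix.exists_eq_smul_of_vecMulVec_eq {K m n : Type*} [Field K] {a b : m → K}
    {w u : n → K} (hw : w ≠ 0) (h : vecMulVec a w = vecMulVec b u) : ∃ c : K, a = c • b := by
  obtain ⟨j, hj⟩ := Function.ne_iff.mp hw
  refine ⟨u j / w j, funext fun i => ?_⟩
  have hij : a i * w j = b i * u j := by simpa only [vecMulVec_apply] using congrFun₂ h i j
  rw [Pi.smul_apply, smul_eq_mul, div_mul_eq_mul_div, eq_div_iff hj, hij, mul_comm]

theorem Matrix.ne_zero_of_mulVec_eq_smul {R n : Type*} [CommRing R] [NoZeroDivisors R]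
    [Fintype n] [DecidableEq n] {M : Matrix n n R} {v : n → R} {μ : R} (hM : M.det ≠ 0)
    (hv : v ≠ 0) (h : M *ᵥ v = μ • v) : μ ≠ 0 := by
  rintro rfl
  exact hv (eq_zero_of_mulVec_eq_zero hM (by rw [h, zero_smul]))

theorem smul_one_mem_GU2 {μ : ℂ} (hμ : μ ≠ 0) : μ • (1 : Matrix (Fin 2) (Fin 2) ℂ) ∈ GU2 :=
  ⟨μ * star μ, mul_ne_zero hμ (star_ne_zero.mpr hμ), by
    rw [star_smul, star_one, smul_mul_smul_comm, mul_one]⟩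

theorem stmt_13_general (M : Matrix (Fin 2) (Fin 2) ℂ) (hdet : M.det = 1)
    (v w : Fin 2 → ℂ) (hv : v ≠ 0) (hw : w ≠ 0) :
    (∃ g ∈ GU2, M * Matrix.vecMulVec v w = Matrix.vecMulVec v w * g) ↔
      ∃ μ : ℂ, M.mulVec v = μ • v := by
  constructor
  · rintro ⟨g, -, hg⟩
    rw [mul_vecMulVec, vecMulVec_mul] at hg
    exact exists_eq_smul_of_vecMulVec_eq hw hg
  · rintro ⟨μ, hμ⟩
    have hμ0 : μ ≠ 0 := ne_zero_of_mulVec_eq_smul (by simp [hdet]) hv hμ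
    refine ⟨μ • 1, smul_one_mem_GU2 hμ0, ?_⟩
    rw [mul_vecMulVec, hμ, smul_vecMulVec, Matrix.mul_smul, Matrix.mul_one]

/-- For `M ∈ SL₂(ℂ)`, `M ≠ ±I`, and a rank-one matrix `X = v·wᵀ`
with `v, w ≠ 0`, the `GU₂`-orbit of `X` is fixed by `X ↦ MX` (i.e. `MX ∈ X·GU₂`)
iff `v` spans an eigenline of `M`. -/
theorem stmt_13 (M : Matrix (Fin 2) (Fin 2) ℂ) (hdet : M.det = 1)
    (hM1 : M ≠ 1) (hM2 : M ≠ -1)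
    (v w : Fin 2 → ℂ) (hv : v ≠ 0) (hw : w ≠ 0) :
    (∃ g ∈ GU2, M * Matrix.vecMulVec v w = Matrix.vecMulVec v w * g) ↔
      ∃ μ : ℂ, M.mulVec v = μ • v :=
  stmt_13_general M hdet v w hv hw
end
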